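/- arXiv:1606.03650 — 8 statements merged into one kernel-verified Lean document; each statement's English description precedes it below -/
import Mathlib

section
/- Assume δ > 0, 1 < τ̲ ≤ τ̄ < ∞, ‖f† − f^δ‖_H ≤ δ, and let φ ∈ V satisfy the lower discrepancy bound τ̲·δ ≤ ‖Tφ − f^δ‖_H. If Ψ is a concave index function, then Ψ(δ) ≤ (τ̄/(τ̲ − 1))·Ψ(‖Tφ − Tφ†‖_H). -/
open Set

/-! From `‖Tφ - f^δ‖ ≤ ‖Tφ - Tφ†‖ + δ` and the lower discrepancy bound one gets
`δ ≤ ‖Tφ - Tφ†‖ / (τ̲ - 1) ≤ c ‖Tφ - Tφ†‖` with `c = τ̄ / (τ̲ - 1) ≥ 1`. Monotonicity of `Ψ` then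
gives `Ψ δ ≤ Ψ (c ‖Tφ - Tφ†‖)`, and a concave function vanishing at `0` satisfies
`Ψ (c t) ≤ c Ψ t` for `c ≥ 1`. -/

theorem ConcaveOn.smul_le_map_smul_of_map_zero {𝕜 E β : Type*} [Field 𝕜] [LinearOrder 𝕜]
    [IsStrictOrderedRing 𝕜] [AddCommGroup E] [Module 𝕜 E] [AddCommMonoid β] [PartialOrder β]
    [Module 𝕜 β] {s : Set E} {f : E → β} (hf : ConcaveOn 𝕜 s f) (hs : (0 : E) ∈ s)
    (hf0 : f 0 = 0) {t : 𝕜} (ht0 : 0 ≤ t) (ht1 : t ≤ 1) {x : E} (hx : x ∈ s) :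
    t • f x ≤ f (t • x) := by
  simpa [hf0] using hf.2 hx hs ht0 (sub_nonneg.2 ht1) (add_sub_cancel t 1)

theorem ConcaveOn.map_mul_le_mul_of_one_le {Ψ : ℝ → ℝ} (hΨ : ConcaveOn ℝ (Ici 0) Ψ)
    (hΨ0 : Ψ 0 = 0) {c t : ℝ} (hc : 1 ≤ c) (ht : 0 ≤ t) : Ψ (c * t) ≤ c * Ψ t := by
  have hc0 : 0 < c := one_pos.trans_le hc
  have h := hΨ.smul_le_map_smul_of_map_zero self_mem_Ici hΨ0 (inv_nonneg.2 hc0.le)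
    (inv_le_one_of_one_le₀ hc) (x := c * t) (mul_nonneg hc0.le ht)
  rwa [smul_eq_mul, smul_eq_mul, inv_mul_cancel_left₀ hc0.ne', inv_mul_le_iff₀ hc0] at h

theorem index_lower_discrepancy_bound_general
    {V H : Type*} [NormedAddCommGroup V] [NormedSpace ℝ V]
    [NormedAddCommGroup H] [InnerProductSpace ℝ H]
    (T : V →L[ℝ] H) (φdag φ : V) (fδ : H) (δ τl τu : ℝ)
    (hτl : 1 < τl) (hτlu : τl ≤ τu)
    (hnoise : ‖T φdag - fδ‖ ≤ δ)
    (hdisc : τl * δ ≤ ‖T φ - fδ‖)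
    (Ψ : ℝ → ℝ)
    (hΨmono : MonotoneOn Ψ (Ici (0 : ℝ)))
    (hΨ0 : Ψ 0 = 0)
    (hΨconc : ConcaveOn ℝ (Ici (0 : ℝ)) Ψ) :
    Ψ δ ≤ (τu / (τl - 1)) * Ψ ‖T φ - T φdag‖ := by
  set e := ‖T φ - T φdag‖
  have hτ : 0 < τl - 1 := sub_pos.2 hτl
  have hδ : 0 ≤ δ := (norm_nonneg _).trans hnoise
  have he : (τl - 1) * δ ≤ e := by
    have := norm_sub_le_norm_sub_add_norm_sub (T φ) (T φdag) fδ
    linarith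
  have hc : 1 ≤ τu / (τl - 1) := by
    rw [one_le_div hτ]
    linarith
  have hδe : δ ≤ τu / (τl - 1) * e := by
    rw [div_mul_eq_mul_div, le_div_iff₀ hτ]
    nlinarith [norm_nonneg (T φ - T φdag)]
  calc Ψ δ ≤ Ψ (τu / (τl - 1) * e) :=
        hΨmono hδ (hδ.trans hδe) hδe
    _ ≤ τu / (τl - 1) * Ψ e := hΨconc.map_mul_le_mul_of_one_le hΨ0 hc (norm_nonneg _)

/-- If `δ > 0`, `1 < τ̲ ≤ τ̄`, the data satisfies `‖f† − f^δ‖ ≤ δ`, and `φ` satisfies the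
lower discrepancy bound `τ̲·δ ≤ ‖Tφ − f^δ‖`, then every concave index function `Ψ`
(continuous, monotone increasing, `Ψ 0 = 0`, nonnegative on `[0,∞)`) satisfies
`Ψ δ ≤ (τ̄/(τ̲ − 1)) * Ψ ‖Tφ − Tφ†‖`. -/
theorem index_lower_discrepancy_bound
    {V H : Type*} [NormedAddCommGroup V] [NormedSpace ℝ V] [CompleteSpace V]
    [NormedAddCommGroup H] [InnerProductSpace ℝ H] [CompleteSpace H]
    (T : V →L[ℝ] H) (φdag φ : V) (fδ : H) (δ τl τu : ℝ)
    (hδ : 0 < δ) (hτl : 1 < τl) (hτlu : τl ≤ τu)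
    (hnoise : ‖T φdag - fδ‖ ≤ δ)
    (hdisc : τl * δ ≤ ‖T φ - fδ‖)
    (Ψ : ℝ → ℝ)
    (hΨcont : ContinuousOn Ψ (Ici (0 : ℝ)))
    (hΨmono : MonotoneOn Ψ (Ici (0 : ℝ)))
    (hΨ0 : Ψ 0 = 0)
    (hΨnonneg : ∀ t ∈ Ici (0 : ℝ), 0 ≤ Ψ t)
    (hΨconc : ConcaveOn ℝ (Ici (0 : ℝ)) Ψ) :
    Ψ δ ≤ (τu / (τl - 1)) * Ψ ‖T φ - T φdag‖ :=
  index_lower_discrepancy_bound_general T φdag φ fδ δ τl τu hτl hτlu hnoise hdisc Ψ hΨmono hΨ0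
    hΨconc
end

section
/- (Verification of the variational source condition.) Assume δ > 0, 1 < τ̲ ≤ τ̄ < ∞, ‖f† − f^δ‖_H ≤ δ, and that φ_α^δ satisfies the lower discrepancy bound τ̲·δ ≤ ‖Tφ_α^δ − f^δ‖_H. Let Ψ be a concave index function, let p be a subgradient of J at φ†, and suppose there is a constant C ≥ 0 with ⟨p, φ† − φ_α^δ⟩ ≤ C·Ψ(δ). Then the variational inequality D_J(φ_α^δ, φ†) ≤ J(φ_α^δ) − J(φ†) + C·(τ̄/(τ̲ − 1))·Ψ(‖Tφ_α^δ − Tφ†‖_H) holds, where D_J(φ_α^δ, φ†) := J(φ_α^δ) − J(φ†) − ⟨p, φ_α^δ − φ†⟩ is the Bregman distance taken with the subgradient p. -/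
open Set

/-!
The coefficient condition bounds the Bregman distance by `J φα - J φ† + C Ψ(δ)`, so it
suffices to control `Ψ(δ)` by the residual `s = ‖T φα - T φ†‖`. The lower discrepancy bound
and the noise bound give `(τ̲ - 1) δ ≤ s`, i.e. `δ ≤ k s` with `k = τ̄ / (τ̲ - 1) ≥ 1`, and a
concave `Ψ` with `Ψ 0 ≥ 0` satisfies `Ψ (k s) ≤ k Ψ s` for `k ≥ 1`.
-/

theorem ConcaveOn.map_smul_le_mul {E : Type*} [AddCommGroup E] [Module ℝ E] {s : Set E}
    {f : E → ℝ} (hf : ConcaveOn ℝ s f) (h₀ : (0 : E) ∈ s) (hf₀ : 0 ≤ f 0) {k : ℝ} (hk : 1 ≤ k)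
    {x : E} (hx : k • x ∈ s) : f (k • x) ≤ k * f x := by
  have hk₀ : 0 < k := one_pos.trans_le hk
  have hx_comb : k⁻¹ • (k • x) + (1 - k⁻¹) • (0 : E) = x := by
    rw [smul_zero, add_zero, smul_smul, inv_mul_cancel₀ hk₀.ne', one_smul]
  have hconc := hf.2 hx h₀ (inv_nonneg.2 hk₀.le) (sub_nonneg.2 (inv_le_one_of_one_le₀ hk))
    (add_sub_cancel _ _)
  rw [hx_comb, smul_eq_mul, smul_eq_mul] at hconc
  have : k⁻¹ * f (k • x) ≤ f x := by nlinarith [inv_le_one_of_one_le₀ hk]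
  calc f (k • x) = k * (k⁻¹ * f (k • x)) := by field_simp
    _ ≤ k * f x := by gcongr

theorem sub_one_mul_le_norm_sub {H : Type*} [SeminormedAddCommGroup H] {a b c : H} {δ τ : ℝ}
    (hac : ‖a - c‖ ≤ δ) (hbc : τ * δ ≤ ‖b - c‖) : (τ - 1) * δ ≤ ‖b - a‖ := by
  have := norm_sub_le_norm_sub_add_norm_sub b a c
  linarith

theorem VSC_verification_general
    {V H : Type*} [NormedAddCommGroup V] [NormedSpace ℝ V]
    [NormedAddCommGroup H] [InnerProductSpace ℝ H]
    (T : V →L[ℝ] H) (J : V → ℝ)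
    (φdag φα : V) (fδ : H) (δ τl τu : ℝ)
    (hτl : 1 < τl) (hτlu : τl ≤ τu)
    (hnoise : ‖T φdag - fδ‖ ≤ δ)
    (hdisc : τl * δ ≤ ‖T φα - fδ‖)
    (Ψ : ℝ → ℝ)
    (hΨmono : MonotoneOn Ψ (Ici (0 : ℝ)))
    (hΨ0 : Ψ 0 = 0)
    (hΨconc : ConcaveOn ℝ (Ici (0 : ℝ)) Ψ)
    (p : V →L[ℝ] ℝ)
    (C : ℝ) (hC : 0 ≤ C)
    (hcoeff : p (φdag - φα) ≤ C * Ψ δ) :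
    J φα - J φdag - p (φα - φdag) ≤
      J φα - J φdag + C * (τu / (τl - 1)) * Ψ ‖T φα - T φdag‖ := by
  set s := ‖T φα - T φdag‖
  set k := τu / (τl - 1)
  have hτ : 0 < τl - 1 := sub_pos.2 hτl
  have hδ : 0 ≤ δ := (norm_nonneg _).trans hnoise
  have hk : 1 ≤ k := (one_le_div hτ).2 (by linarith)
  have hδs : δ ≤ k * s := by
    have := sub_one_mul_le_norm_sub hnoise hdisc
    rw [div_mul_eq_mul_div, le_div_iff₀ hτ]
    nlinarith [norm_nonneg (T φα - T φdag)]
  have hks : 0 ≤ k * s := hδ.trans hδs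
  calc J φα - J φdag - p (φα - φdag) = J φα - J φdag + p (φdag - φα) := by
        rw [← neg_sub φdag φα, map_neg, sub_neg_eq_add]
    _ ≤ J φα - J φdag + C * Ψ (k * s) := by
        gcongr
        exact hcoeff.trans (mul_le_mul_of_nonneg_left (hΨmono hδ hks hδs) hC)
    _ ≤ J φα - J φdag + C * (k * Ψ s) := by
        gcongr
        exact hΨconc.map_smul_le_mul self_mem_Ici hΨ0.ge hk hks
    _ = J φα - J φdag + C * k * Ψ s := by ring

/-- Verification of the variational source condition (Theorem 3.1 of the paper):
under Morozov's lower discrepancy bound and the coefficient condition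
`⟨p, φ† − φ_α^δ⟩ ≤ C·Ψ(δ)` for a subgradient `p` of the convex functional `J` at `φ†`,
the Bregman distance `D_J(φ_α^δ, φ†)` (taken with subgradient `p`) satisfies the
variational inequality. -/
theorem VSC_verification
    {V H : Type*} [NormedAddCommGroup V] [NormedSpace ℝ V] [CompleteSpace V]
    [NormedAddCommGroup H] [InnerProductSpace ℝ H] [CompleteSpace H]
    (T : V →L[ℝ] H) (J : V → ℝ) (hJ : ConvexOn ℝ Set.univ J)
    (φdag φα : V) (fδ : H) (δ τl τu : ℝ)
    (hδ : 0 < δ) (hτl : 1 < τl) (hτlu : τl ≤ τu)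
    (hnoise : ‖T φdag - fδ‖ ≤ δ)
    (hdisc : τl * δ ≤ ‖T φα - fδ‖)
    (Ψ : ℝ → ℝ)
    (hΨcont : ContinuousOn Ψ (Ici (0 : ℝ)))
    (hΨmono : MonotoneOn Ψ (Ici (0 : ℝ)))
    (hΨ0 : Ψ 0 = 0)
    (hΨnonneg : ∀ t ∈ Ici (0 : ℝ), 0 ≤ Ψ t)
    (hΨconc : ConcaveOn ℝ (Ici (0 : ℝ)) Ψ)
    (p : V →L[ℝ] ℝ)
    (hp : ∀ v : V, p (v - φdag) ≤ J v - J φdag)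
    (C : ℝ) (hC : 0 ≤ C)
    (hcoeff : p (φdag - φα) ≤ C * Ψ δ) :
    J φα - J φdag - p (φα - φdag) ≤
      J φα - J φdag + C * (τu / (τl - 1)) * Ψ ‖T φα - T φdag‖ :=
  VSC_verification_general T J φdag φα fδ δ τl τu hτl hτlu hnoise hdisc Ψ hΨmono hΨ0 hΨconc p C hC
    hcoeff
end

section
/- Suppose the variational source condition holds with coefficient σ ∈ (0,1], concave index function Ψ and a subgradient p† of J at φ†: (σ/2)·(J(φ) − J(φ†) − ⟨p†, φ − φ†⟩) ≤ J(φ) − J(φ†) + Ψ(‖Tφ − Tφ†‖_H) for all φ ∈ V. Let α > 0, let φ_α^δ minimize F_α over V, and assume ‖f† − f^δ‖_H ≤ δ. Then (σ/(4α))·‖Tφ_α^δ − f^δ‖_H² − (σ/4)·(δ²/α) ≤ Ψ(‖Tφ_α^δ − Tφ†‖_H). -/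
/-!
Comparing the minimizer with `φ†` in the Tikhonov functional gives
`α (J φ_α^δ − J φ†) ≤ (δ² − ‖Tφ_α^δ − f^δ‖²)/2`. Since `p†` is a subgradient, the left side of
the variational source condition is nonnegative, so
`Ψ(‖Tφ_α^δ − Tφ†‖) ≥ J φ† − J φ_α^δ ≥ (‖Tφ_α^δ − f^δ‖² − δ²)/(2α)`. Multiplying by `σ/2`
and using `σ ≤ 2`, `Ψ ≥ 0` gives `σ(‖Tφ_α^δ − f^δ‖² − δ²)/(4α) ≤ σΨ/2 ≤ Ψ`.
-/

open Set

theorem mul_sub_le_of_tikhonov_le {V H : Type*} [NormedAddCommGroup H]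
    (T : V → H) (J : V → ℝ) (fδ : H) (α : ℝ) (φα φ : V)
    (hmin : (1 / 2) * ‖T φα - fδ‖ ^ 2 + α * J φα ≤ (1 / 2) * ‖T φ - fδ‖ ^ 2 + α * J φ) :
    α * (J φα - J φ) ≤ (‖T φ - fδ‖ ^ 2 - ‖T φα - fδ‖ ^ 2) / 2 := by
  linarith

theorem sub_le_of_variationalSource {V : Type*} [Sub V] (J p : V → ℝ) (φdag φ : V)
    (σ ψ : ℝ) (hσ : 0 ≤ σ) (hsub : p (φ - φdag) ≤ J φ - J φdag)
    (hVSC : (σ / 2) * (J φ - J φdag - p (φ - φdag)) ≤ J φ - J φdag + ψ) :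
    J φdag - J φ ≤ ψ := by
  have hbregman : 0 ≤ (σ / 2) * (J φ - J φdag - p (φ - φdag)) :=
    mul_nonneg (by linarith) (by linarith)
  linarith

theorem scaled_sub_le_of_sub_le {a b α σ ψ : ℝ} (hα : 0 < α) (hσ0 : 0 ≤ σ) (hσ2 : σ ≤ 2)
    (hψ : 0 ≤ ψ) (h : a - b ≤ 2 * α * ψ) :
    (σ / (4 * α)) * a - (σ / 4) * (b / α) ≤ ψ := by
  have hσh : σ * (a - b) ≤ 4 * α * ψ :=
    calc σ * (a - b) ≤ σ * (2 * α * ψ) := mul_le_mul_of_nonneg_left h hσ0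
      _ ≤ 2 * (2 * α * ψ) := mul_le_mul_of_nonneg_right hσ2 (by positivity)
      _ = 4 * α * ψ := by ring
  calc (σ / (4 * α)) * a - (σ / 4) * (b / α) = σ * (a - b) / (4 * α) := by
        field_simp
    _ ≤ ψ := by rw [div_le_iff₀ (by positivity)]; linarith

theorem index_lower_bound_of_minimizer_general
    {V H : Type*} [NormedAddCommGroup V] [NormedSpace ℝ V]
    [NormedAddCommGroup H] [InnerProductSpace ℝ H]
    (T : V →L[ℝ] H) (J : V → ℝ)
    (φdag φα : V) (fδ : H) (δ σ α : ℝ)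
    (hσ0 : 0 < σ) (hσ1 : σ ≤ 1) (hα : 0 < α)
    (hnoise : ‖T φdag - fδ‖ ≤ δ)
    (Ψ : ℝ → ℝ)
    (hΨnonneg : ∀ t ∈ Ici (0 : ℝ), 0 ≤ Ψ t)
    (pdag : V →L[ℝ] ℝ)
    (hpdag : ∀ v : V, pdag (v - φdag) ≤ J v - J φdag)
    (hVSC : ∀ φ : V, (σ / 2) * (J φ - J φdag - pdag (φ - φdag)) ≤
      J φ - J φdag + Ψ ‖T φ - T φdag‖)
    (hmin : ∀ φ : V, (1 / 2) * ‖T φα - fδ‖ ^ 2 + α * J φα ≤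
      (1 / 2) * ‖T φ - fδ‖ ^ 2 + α * J φ) :
    (σ / (4 * α)) * ‖T φα - fδ‖ ^ 2 - (σ / 4) * (δ ^ 2 / α) ≤
      Ψ ‖T φα - T φdag‖ := by
  have hnoise_sq : ‖T φdag - fδ‖ ^ 2 ≤ δ ^ 2 := pow_le_pow_left₀ (norm_nonneg _) hnoise 2
  have hgap := mul_sub_le_of_tikhonov_le T J fδ α φα φdag (hmin φdag)
  have hdrop := sub_le_of_variationalSource J pdag φdag φα σ _ hσ0.le (hpdag φα) (hVSC φα)
  refine scaled_sub_le_of_sub_le hα hσ0.le (by linarith) (hΨnonneg _ (norm_nonneg _)) ?_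
  linarith [mul_le_mul_of_nonneg_left hdrop hα.le]

/-- Under the variational source condition with coefficient `σ ∈ (0,1]`, concave index
function `Ψ` and subgradient `p†` of `J` at `φ†`, if `φ_α^δ` minimizes the Tikhonov functional
`F_α(φ) = (1/2)‖Tφ − f^δ‖² + α·J(φ)` and `‖f† − f^δ‖ ≤ δ`, then
`(σ/(4α))·‖Tφ_α^δ − f^δ‖² − (σ/4)·(δ²/α) ≤ Ψ(‖Tφ_α^δ − Tφ†‖)`. -/
theorem index_lower_bound_of_minimizer
    {V H : Type*} [NormedAddCommGroup V] [NormedSpace ℝ V] [CompleteSpace V]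
    [NormedAddCommGroup H] [InnerProductSpace ℝ H] [CompleteSpace H]
    (T : V →L[ℝ] H) (J : V → ℝ) (hJ : ConvexOn ℝ Set.univ J)
    (φdag φα : V) (fδ : H) (δ σ α : ℝ)
    (hδ : 0 < δ) (hσ0 : 0 < σ) (hσ1 : σ ≤ 1) (hα : 0 < α)
    (hnoise : ‖T φdag - fδ‖ ≤ δ)
    (Ψ : ℝ → ℝ)
    (hΨcont : ContinuousOn Ψ (Ici (0 : ℝ)))
    (hΨmono : MonotoneOn Ψ (Ici (0 : ℝ)))
    (hΨ0 : Ψ 0 = 0)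
    (hΨnonneg : ∀ t ∈ Ici (0 : ℝ), 0 ≤ Ψ t)
    (hΨconc : ConcaveOn ℝ (Ici (0 : ℝ)) Ψ)
    (pdag : V →L[ℝ] ℝ)
    (hpdag : ∀ v : V, pdag (v - φdag) ≤ J v - J φdag)
    (hVSC : ∀ φ : V, (σ / 2) * (J φ - J φdag - pdag (φ - φdag)) ≤
      J φ - J φdag + Ψ ‖T φ - T φdag‖)
    (hmin : ∀ φ : V, (1 / 2) * ‖T φα - fδ‖ ^ 2 + α * J φα ≤
      (1 / 2) * ‖T φ - fδ‖ ^ 2 + α * J φ) :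
    (σ / (4 * α)) * ‖T φα - fδ‖ ^ 2 - (σ / 4) * (δ ^ 2 / α) ≤
      Ψ ‖T φα - T φdag‖ :=
  index_lower_bound_of_minimizer_general T J φdag φα fδ δ σ α hσ0 hσ1 hα hnoise Ψ hΨnonneg pdag
    hpdag hVSC hmin
end

section
/- (New lower bound for the regularization parameter.) Assume δ > 0, 1 < τ̲ ≤ τ̄ < ∞, ‖f† − f^δ‖_H ≤ δ, the variational source condition holds with coefficient σ ∈ (0,1], concave index function Ψ and a subgradient p† of J at φ†, and φ_α^δ minimizes F_α over V with α > 0 chosen so that Morozov's discrepancy principle τ̲·δ ≤ ‖Tφ_α^δ − f^δ‖_H ≤ τ̄·δ holds. Then (σ/4)·((τ̲² − 1)/(τ̄ + 1))·δ² ≤ α·Ψ(δ). (When τ̄ = τ̲ this is the paper's bound (σ/4)(τ̲ − 1)δ² ≤ α·Ψ(δ).) -/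
open Set

/-!
Testing the minimality of `φ_α^δ` against `φ†` and using both sides of the discrepancy
principle gives `(τ̲² − 1) δ² / 2 ≤ α (J φ† − J φ_α^δ)`. Since Bregman distances are
nonnegative, the VSC bounds `J φ† − J φ_α^δ` by `Ψ(‖Tφ_α^δ − Tφ†‖)`, and
`‖Tφ_α^δ − Tφ†‖ ≤ (τ̄ + 1) δ`. Concavity of `Ψ` with `Ψ 0 = 0` then gives
`Ψ((τ̄ + 1) δ) ≤ (τ̄ + 1) Ψ(δ)`, and `σ ≤ 1` absorbs the remaining factor.
-/

theorem ConcaveOn.map_smul_le_mul_of_one_le {E : Type*} [AddCommGroup E] [Module ℝ E]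
    {s : Set E} {f : E → ℝ} (hf : ConcaveOn ℝ s f) (hs₀ : (0 : E) ∈ s) (hf₀ : 0 ≤ f 0)
    {c : ℝ} (hc : 1 ≤ c) {x : E} (hcx : c • x ∈ s) :
    f (c • x) ≤ c * f x := by
  have hc₀ : 0 < c := by linarith
  have hweight : 0 ≤ 1 - c⁻¹ := sub_nonneg.2 (inv_le_one_of_one_le₀ hc)
  have hconc := hf.2 hcx hs₀ (inv_nonneg.2 hc₀.le) hweight (add_sub_cancel _ _)
  rw [smul_zero, add_zero, inv_smul_smul₀ hc₀.ne', smul_eq_mul, smul_eq_mul] at hconc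
  have hinv : c⁻¹ * f (c • x) ≤ f x := by linarith [mul_nonneg hweight hf₀]
  calc f (c • x) = c * (c⁻¹ * f (c • x)) := by field_simp
    _ ≤ c * f x := by gcongr

section Bregman

variable {V : Type*} [AddCommGroup V] [Module ℝ V] [TopologicalSpace V]

def bregmanDistance (J : V → ℝ) (p : V →L[ℝ] ℝ) (u v : V) : ℝ :=
  J v - J u - p (v - u)

theorem bregmanDistance_nonneg {J : V → ℝ} {p : V →L[ℝ] ℝ} {u : V}
    (hp : ∀ v, p (v - u) ≤ J v - J u) (v : V) : 0 ≤ bregmanDistance J p u v :=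
  sub_nonneg.2 (hp v)

theorem sub_le_of_sourceCondition {J : V → ℝ} {p : V →L[ℝ] ℝ} {u v : V} {σ r : ℝ}
    (hp : ∀ w, p (w - u) ≤ J w - J u) (hσ : 0 ≤ σ)
    (hsrc : σ / 2 * bregmanDistance J p u v ≤ J v - J u + r) :
    J u - J v ≤ r := by
  have := mul_nonneg (div_nonneg hσ zero_le_two) (bregmanDistance_nonneg hp v)
  linarith

end Bregman

theorem sq_sub_one_mul_sq_le_of_tikhonov_min {V H : Type*} [SeminormedAddCommGroup H]
    (T : V → H) (J : V → ℝ) (φdag φα : V) (fδ : H) (δ α τ : ℝ)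
    (hτδ : 0 ≤ τ * δ) (hnoise : ‖T φdag - fδ‖ ≤ δ) (hdisc : τ * δ ≤ ‖T φα - fδ‖)
    (hmin : (1 / 2) * ‖T φα - fδ‖ ^ 2 + α * J φα ≤ (1 / 2) * ‖T φdag - fδ‖ ^ 2 + α * J φdag) :
    (1 / 2) * (τ ^ 2 - 1) * δ ^ 2 ≤ α * (J φdag - J φα) := by
  have hdag : ‖T φdag - fδ‖ ^ 2 ≤ δ ^ 2 := pow_le_pow_left₀ (norm_nonneg _) hnoise 2
  have hmisfit : (τ * δ) ^ 2 ≤ ‖T φα - fδ‖ ^ 2 := pow_le_pow_left₀ hτδ hdisc 2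
  linarith [mul_pow τ δ 2]

theorem new_lower_bound_regularization_parameter_general
    {V H : Type*} [NormedAddCommGroup V] [NormedSpace ℝ V]
    [NormedAddCommGroup H] [InnerProductSpace ℝ H]
    (T : V →L[ℝ] H) (J : V → ℝ)
    (φdag φα : V) (fδ : H) (δ σ α τl τu : ℝ)
    (hδ : 0 < δ) (hσ0 : 0 < σ) (hσ1 : σ ≤ 1) (hα : 0 < α)
    (hτl : 1 < τl) (hτlu : τl ≤ τu)
    (hnoise : ‖T φdag - fδ‖ ≤ δ)
    (Ψ : ℝ → ℝ)
    (hΨmono : MonotoneOn Ψ (Ici (0 : ℝ)))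
    (hΨ0 : Ψ 0 = 0)
    (hΨconc : ConcaveOn ℝ (Ici (0 : ℝ)) Ψ)
    (pdag : V →L[ℝ] ℝ)
    (hpdag : ∀ v : V, pdag (v - φdag) ≤ J v - J φdag)
    (hVSC : ∀ φ : V, (σ / 2) * (J φ - J φdag - pdag (φ - φdag)) ≤
      J φ - J φdag + Ψ ‖T φ - T φdag‖)
    (hmin : ∀ φ : V, (1 / 2) * ‖T φα - fδ‖ ^ 2 + α * J φα ≤
      (1 / 2) * ‖T φ - fδ‖ ^ 2 + α * J φ)
    (hdisc_low : τl * δ ≤ ‖T φα - fδ‖)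
    (hdisc_up : ‖T φα - fδ‖ ≤ τu * δ) :
    (σ / 4) * ((τl ^ 2 - 1) / (τu + 1)) * δ ^ 2 ≤ α * Ψ δ := by
  have hτu : 0 < τu + 1 := by linarith
  have hgain := sq_sub_one_mul_sq_le_of_tikhonov_min T J φdag φα fδ δ α τl
    (by positivity) hnoise hdisc_low (hmin φdag)
  have hdefect : J φdag - J φα ≤ Ψ ‖T φα - T φdag‖ :=
    sub_le_of_sourceCondition hpdag hσ0.le (hVSC φα)
  have hdist : ‖T φα - T φdag‖ ≤ (τu + 1) * δ := by
    calc ‖T φα - T φdag‖ ≤ ‖T φα - fδ‖ + ‖fδ - T φdag‖ := norm_sub_le_norm_sub_add_norm_sub ..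
      _ ≤ (τu + 1) * δ := by rw [norm_sub_rev fδ]; linarith
  have hΨdist : Ψ ‖T φα - T φdag‖ ≤ (τu + 1) * Ψ δ :=
    (hΨmono (norm_nonneg _) (by simp only [mem_Ici]; positivity) hdist).trans
      (hΨconc.map_smul_le_mul_of_one_le self_mem_Ici hΨ0.ge (by linarith)
        (by simp only [mem_Ici, smul_eq_mul]; positivity))
  have hgain_le : α * (J φdag - J φα) ≤ α * ((τu + 1) * Ψ δ) :=
    mul_le_mul_of_nonneg_left (hdefect.trans hΨdist) hα.le
  have hratio : (τl ^ 2 - 1) / (τu + 1) * δ ^ 2 ≤ 2 * α * Ψ δ := by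
    rw [div_mul_eq_mul_div, div_le_iff₀ hτu]
    linarith
  have hD : 0 ≤ (τl ^ 2 - 1) / (τu + 1) * δ ^ 2 := by
    have : 0 ≤ τl ^ 2 - 1 := by nlinarith
    positivity
  calc σ / 4 * ((τl ^ 2 - 1) / (τu + 1)) * δ ^ 2
      = σ / 4 * ((τl ^ 2 - 1) / (τu + 1) * δ ^ 2) := by ring
    _ ≤ 1 / 2 * ((τl ^ 2 - 1) / (τu + 1) * δ ^ 2) := by gcongr; linarith
    _ ≤ α * Ψ δ := by linarith

/-- New lower bound for the regularization parameter (Theorem 4.1 of the paper):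
under the VSC and Morozov's discrepancy principle
`τ̲·δ ≤ ‖Tφ_α^δ − f^δ‖ ≤ τ̄·δ`, one has `(σ/4)·((τ̲² − 1)/(τ̄ + 1))·δ² ≤ α·Ψ(δ)`. -/
theorem new_lower_bound_regularization_parameter
    {V H : Type*} [NormedAddCommGroup V] [NormedSpace ℝ V] [CompleteSpace V]
    [NormedAddCommGroup H] [InnerProductSpace ℝ H] [CompleteSpace H]
    (T : V →L[ℝ] H) (J : V → ℝ) (hJ : ConvexOn ℝ Set.univ J)
    (φdag φα : V) (fδ : H) (δ σ α τl τu : ℝ)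
    (hδ : 0 < δ) (hσ0 : 0 < σ) (hσ1 : σ ≤ 1) (hα : 0 < α)
    (hτl : 1 < τl) (hτlu : τl ≤ τu)
    (hnoise : ‖T φdag - fδ‖ ≤ δ)
    (Ψ : ℝ → ℝ)
    (hΨcont : ContinuousOn Ψ (Ici (0 : ℝ)))
    (hΨmono : MonotoneOn Ψ (Ici (0 : ℝ)))
    (hΨ0 : Ψ 0 = 0)
    (hΨnonneg : ∀ t ∈ Ici (0 : ℝ), 0 ≤ Ψ t)
    (hΨconc : ConcaveOn ℝ (Ici (0 : ℝ)) Ψ)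
    (pdag : V →L[ℝ] ℝ)
    (hpdag : ∀ v : V, pdag (v - φdag) ≤ J v - J φdag)
    (hVSC : ∀ φ : V, (σ / 2) * (J φ - J φdag - pdag (φ - φdag)) ≤
      J φ - J φdag + Ψ ‖T φ - T φdag‖)
    (hmin : ∀ φ : V, (1 / 2) * ‖T φα - fδ‖ ^ 2 + α * J φα ≤
      (1 / 2) * ‖T φ - fδ‖ ^ 2 + α * J φ)
    (hdisc_low : τl * δ ≤ ‖T φα - fδ‖)
    (hdisc_up : ‖T φα - fδ‖ ≤ τu * δ) :
    (σ / 4) * ((τl ^ 2 - 1) / (τu + 1)) * δ ^ 2 ≤ α * Ψ δ :=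
  new_lower_bound_regularization_parameter_general T J φdag φα fδ δ σ α τl τu hδ hσ0 hσ1 hα hτl hτlu
    hnoise Ψ hΨmono hΨ0 hΨconc pdag hpdag hVSC hmin hdisc_low hdisc_up
end

section
/- (Maximal regularization parameter.) Assume J ≥ 0 on V, δ > 0, σ ∈ (0,1], τ̲ > 1, ‖f† − f^δ‖_H ≤ δ, φ_α^δ minimizes F_α over V for some α > 0, Ψ(δ) > 0, and the lower bound (σ/4)·(τ̲ − 1)·δ² ≤ α·Ψ(δ) holds. Define α_max := ( (8/(σ·(τ̲ − 1)))·Ψ(δ) + J(φ†) )⁻¹. If α ≤ α_max, then F_{α_max}(φ_α^δ) ≤ α_max·( 2·δ²/α + J(φ†) ) ≤ 1; in particular the value of the Tikhonov functional with parameter α_max at φ_α^δ is finite and at most 1. -/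
open Set

/-!
Comparing parameters: for `α ≤ β` the functional `F_β` is dominated by `(β / α) • F_α`, since
raising the weight of the data term from `1` to `β / α ≥ 1` only increases it. Evaluating at the
minimizer `φ_α^δ` and comparing with the competitor `φ†`, whose residual is at most `δ`, gives
`F_β(φ_α^δ) ≤ β (δ² / (2α) + J(φ†))`. The lower bound on `α Ψ(δ)` says exactly that
`2δ² / α ≤ 8 Ψ(δ) / (σ (τ̲ - 1))`, i.e. that `α_max (2δ² / α + J(φ†)) ≤ 1`.
-/

section Tikhonov

variable {V H : Type*} [NormedAddCommGroup V] [NormedSpace ℝ V]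
  [NormedAddCommGroup H] [NormedSpace ℝ H] (T : V →L[ℝ] H) (J : V → ℝ) (fδ : H)

noncomputable def tikhonov (α : ℝ) (φ : V) : ℝ :=
  1 / 2 * ‖T φ - fδ‖ ^ 2 + α * J φ

variable {T J fδ}

theorem tikhonov_le_div_mul_tikhonov {α β : ℝ} (hα : 0 < α) (hαβ : α ≤ β) (φ : V) :
    tikhonov T J fδ β φ ≤ β / α * tikhonov T J fδ α φ := by
  have hratio : 1 ≤ β / α := (one_le_div hα).2 hαβ
  have hres : 0 ≤ 1 / 2 * ‖T φ - fδ‖ ^ 2 := by positivity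
  calc tikhonov T J fδ β φ = 1 * (1 / 2 * ‖T φ - fδ‖ ^ 2) + β / α * α * J φ := by
        rw [tikhonov, div_mul_cancel₀ β hα.ne', one_mul]
    _ ≤ β / α * (1 / 2 * ‖T φ - fδ‖ ^ 2) + β / α * α * J φ := by gcongr
    _ = β / α * tikhonov T J fδ α φ := by rw [tikhonov]; ring

theorem tikhonov_le_of_norm_sub_le {α δ : ℝ} {φ : V} (hnoise : ‖T φ - fδ‖ ≤ δ) :
    tikhonov T J fδ α φ ≤ δ ^ 2 / 2 + α * J φ := by
  have hsq : ‖T φ - fδ‖ ^ 2 ≤ δ ^ 2 := pow_le_pow_left₀ (norm_nonneg _) hnoise 2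
  rw [tikhonov]
  linarith

theorem tikhonov_minimizer_le {α β δ : ℝ} {φdag φα : V} (hα : 0 < α) (hαβ : α ≤ β)
    (hnoise : ‖T φdag - fδ‖ ≤ δ) (hmin : ∀ φ, tikhonov T J fδ α φα ≤ tikhonov T J fδ α φ) :
    tikhonov T J fδ β φα ≤ β * (δ ^ 2 / (2 * α) + J φdag) := by
  have hβ : 0 ≤ β / α := div_nonneg (hα.le.trans hαβ) hα.le
  calc tikhonov T J fδ β φα ≤ β / α * tikhonov T J fδ α φα :=
        tikhonov_le_div_mul_tikhonov hα hαβ φα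
    _ ≤ β / α * (δ ^ 2 / 2 + α * J φdag) :=
        mul_le_mul_of_nonneg_left ((hmin φdag).trans (tikhonov_le_of_norm_sub_le hnoise)) hβ
    _ = β * (δ ^ 2 / (2 * α) + J φdag) := by field_simp

end Tikhonov

theorem two_mul_sq_div_le_of_lower_bound {δ σ α τl p : ℝ} (hσ0 : 0 < σ) (hα : 0 < α)
    (hτl : 1 < τl) (hlow : σ / 4 * (τl - 1) * δ ^ 2 ≤ α * p) :
    2 * δ ^ 2 / α ≤ 8 / (σ * (τl - 1)) * p := by
  have hc : 0 < σ * (τl - 1) := mul_pos hσ0 (by linarith)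
  rw [div_le_iff₀ hα, div_mul_eq_mul_div, div_mul_eq_mul_div, le_div_iff₀ hc]
  linarith

theorem maximal_regularization_parameter_general
    {V H : Type*} [NormedAddCommGroup V] [NormedSpace ℝ V]
    [NormedAddCommGroup H] [InnerProductSpace ℝ H]
    (T : V →L[ℝ] H) (J : V → ℝ)
    (φdag φα : V) (fδ : H) (δ σ α τl : ℝ)
    (hσ0 : 0 < σ) (hα : 0 < α) (hτl : 1 < τl)
    (hnoise : ‖T φdag - fδ‖ ≤ δ)
    (Ψ : ℝ → ℝ)
    (hmin : ∀ φ : V, (1 / 2) * ‖T φα - fδ‖ ^ 2 + α * J φα ≤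
      (1 / 2) * ‖T φ - fδ‖ ^ 2 + α * J φ)
    (hlow : (σ / 4) * (τl - 1) * δ ^ 2 ≤ α * Ψ δ)
    (hαmax : α ≤ ((8 / (σ * (τl - 1))) * Ψ δ + J φdag)⁻¹) :
    (1 / 2) * ‖T φα - fδ‖ ^ 2 +
        ((8 / (σ * (τl - 1))) * Ψ δ + J φdag)⁻¹ * J φα ≤
      ((8 / (σ * (τl - 1))) * Ψ δ + J φdag)⁻¹ * (2 * δ ^ 2 / α + J φdag) ∧
    ((8 / (σ * (τl - 1))) * Ψ δ + J φdag)⁻¹ * (2 * δ ^ 2 / α + J φdag) ≤ 1 := by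
  set A := 8 / (σ * (τl - 1)) * Ψ δ + J φdag
  have hA : 0 < A := inv_pos.1 (hα.trans_le hαmax)
  constructor
  · have hδα : δ ^ 2 / (2 * α) ≤ 2 * δ ^ 2 / α := by
      rw [div_le_div_iff₀ (by positivity) hα]
      nlinarith [sq_nonneg δ]
    calc tikhonov T J fδ A⁻¹ φα ≤ A⁻¹ * (δ ^ 2 / (2 * α) + J φdag) :=
          tikhonov_minimizer_le hα hαmax hnoise hmin
      _ ≤ A⁻¹ * (2 * δ ^ 2 / α + J φdag) := by gcongr
  · rw [inv_mul_le_iff₀ hA, mul_one]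
    linarith [two_mul_sq_div_le_of_lower_bound hσ0 hα hτl hlow]

/-- Maximal regularization parameter (Theorem 4.2 of the paper): with
`α_max := ((8/(σ·(τ̲ − 1)))·Ψ(δ) + J(φ†))⁻¹`, if `α ≤ α_max` then the Tikhonov functional
with parameter `α_max` evaluated at `φ_α^δ` is bounded by `α_max·(2δ²/α + J(φ†)) ≤ 1`. -/
theorem maximal_regularization_parameter
    {V H : Type*} [NormedAddCommGroup V] [NormedSpace ℝ V] [CompleteSpace V]
    [NormedAddCommGroup H] [InnerProductSpace ℝ H] [CompleteSpace H]
    (T : V →L[ℝ] H) (J : V → ℝ) (hJ : ConvexOn ℝ Set.univ J)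
    (hJnonneg : ∀ φ : V, 0 ≤ J φ)
    (φdag φα : V) (fδ : H) (δ σ α τl : ℝ)
    (hδ : 0 < δ) (hσ0 : 0 < σ) (hσ1 : σ ≤ 1) (hα : 0 < α) (hτl : 1 < τl)
    (hnoise : ‖T φdag - fδ‖ ≤ δ)
    (Ψ : ℝ → ℝ)
    (hΨcont : ContinuousOn Ψ (Ici (0 : ℝ)))
    (hΨmono : MonotoneOn Ψ (Ici (0 : ℝ)))
    (hΨ0 : Ψ 0 = 0)
    (hΨnonneg : ∀ t ∈ Ici (0 : ℝ), 0 ≤ Ψ t)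
    (hΨδpos : 0 < Ψ δ)
    (hmin : ∀ φ : V, (1 / 2) * ‖T φα - fδ‖ ^ 2 + α * J φα ≤
      (1 / 2) * ‖T φ - fδ‖ ^ 2 + α * J φ)
    (hlow : (σ / 4) * (τl - 1) * δ ^ 2 ≤ α * Ψ δ)
    (hαmax : α ≤ ((8 / (σ * (τl - 1))) * Ψ δ + J φdag)⁻¹) :
    (1 / 2) * ‖T φα - fδ‖ ^ 2 +
        ((8 / (σ * (τl - 1))) * Ψ δ + J φdag)⁻¹ * J φα ≤
      ((8 / (σ * (τl - 1))) * Ψ δ + J φdag)⁻¹ * (2 * δ ^ 2 / α + J φdag) ∧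
    ((8 / (σ * (τl - 1))) * Ψ δ + J φdag)⁻¹ * (2 * δ ^ 2 / α + J φdag) ≤ 1 :=
  maximal_regularization_parameter_general T J φdag φα fδ δ σ α τl hσ0 hα hτl hnoise Ψ hmin hlow
    hαmax
end

section
/- (Stability of the J-difference under the Hofmann–Mathé lower bound.) Assume δ > 0, τ̲ > 1, ‖f† − f^δ‖_H ≤ δ, Ψ is a concave index function, φ_α^δ minimizes F_α over V with α > 0, and the regularization parameter satisfies the lower bound (1/4)·((τ̲² − 1)/(τ̲² + 1))·δ² ≤ α·Ψ((τ̲ − 1)·δ). Then J(φ_α^δ) − J(φ†) ≤ 2·((τ̲² + 1)/(τ̲ − 1))·Ψ(δ). -/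
open Set

/-! Testing the minimality of `φα` against `φ†` gives `α (J φα − J φ†) ≤ δ² / 2`. Concavity of `Ψ`
with `Ψ 0 = 0` gives `Ψ ((τ − 1) δ) ≤ Ψ ((τ + 1) δ) ≤ (τ + 1) Ψ δ`, so the Hofmann–Mathé lower bound
turns into `δ² ≤ 4 ((τ² + 1) / (τ − 1)) α Ψ δ`; combining the two and dividing by `α` gives the
claim. -/

theorem ConcaveOn.map_mul_le_mul_map {f : ℝ → ℝ} (hf : ConcaveOn ℝ (Ici 0) f) (hf0 : 0 ≤ f 0)
    {s t : ℝ} (hs : 1 ≤ s) (ht : 0 ≤ t) : f (s * t) ≤ s * f t := by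
  have hs₀ : 0 < s := one_pos.trans_le hs
  have hst : 0 ≤ s * t := mul_nonneg hs₀.le ht
  -- `t` is the convex combination `s⁻¹ • (s * t) + (1 - s⁻¹) • 0`
  have hcomb := hf.2 (mem_Ici.2 hst) (mem_Ici.2 le_rfl) (inv_nonneg.2 hs₀.le)
    (sub_nonneg.2 (inv_le_one_of_one_le₀ hs)) (add_sub_cancel _ _)
  simp only [smul_eq_mul, mul_zero, add_zero, inv_mul_cancel_left₀ hs₀.ne'] at hcomb
  have : s⁻¹ * f (s * t) ≤ f t := by
    nlinarith [inv_le_one_of_one_le₀ hs]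
  rwa [inv_mul_le_iff₀ hs₀] at this

theorem tikhonov_minimizer_penalty_gap_le {V H : Type*} [SeminormedAddCommGroup H]
    (T : V → H) (J : V → ℝ) {φα φ : V} {fδ : H} {α δ : ℝ}
    (hmin : (1 / 2) * ‖T φα - fδ‖ ^ 2 + α * J φα ≤ (1 / 2) * ‖T φ - fδ‖ ^ 2 + α * J φ)
    (hφ : ‖T φ - fδ‖ ≤ δ) : α * (J φα - J φ) ≤ δ ^ 2 / 2 := by
  have hsq : ‖T φ - fδ‖ ^ 2 ≤ δ ^ 2 := pow_le_pow_left₀ (norm_nonneg _) hφ 2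
  nlinarith [sq_nonneg ‖T φα - fδ‖]

theorem sq_le_of_hofmannMathe_lower_bound {Ψ : ℝ → ℝ} {α δ τ : ℝ} (hτ : 1 < τ)
    (hΨ : Ψ ((τ - 1) * δ) ≤ (τ + 1) * Ψ δ) (hα : 0 ≤ α)
    (hlow : (1 / 4) * ((τ ^ 2 - 1) / (τ ^ 2 + 1)) * δ ^ 2 ≤ α * Ψ ((τ - 1) * δ)) :
    δ ^ 2 ≤ 4 * ((τ ^ 2 + 1) / (τ - 1)) * (α * Ψ δ) := by
  have hτ₁ : 0 < τ - 1 := sub_pos.2 hτ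
  have hτ₂ : 0 < τ + 1 := by linarith
  have hlow' : (τ - 1) * (τ + 1) * δ ^ 2 ≤ 4 * (τ ^ 2 + 1) * (τ + 1) * (α * Ψ δ) := by
    have := hlow.trans (mul_le_mul_of_nonneg_left hΨ hα)
    rw [div_eq_mul_inv] at this
    field_simp at this
    nlinarith
  rw [mul_div_assoc', div_mul_eq_mul_div, le_div_iff₀ hτ₁]
  nlinarith

theorem J_difference_stability_HofmannMathe_general
    {V H : Type*} [NormedAddCommGroup V] [NormedSpace ℝ V]
    [NormedAddCommGroup H] [InnerProductSpace ℝ H]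
    (T : V →L[ℝ] H) (J : V → ℝ)
    (φdag φα : V) (fδ : H) (δ α τl : ℝ)
    (hδ : 0 < δ) (hα : 0 < α) (hτl : 1 < τl)
    (hnoise : ‖T φdag - fδ‖ ≤ δ)
    (Ψ : ℝ → ℝ)
    (hΨmono : MonotoneOn Ψ (Ici (0 : ℝ)))
    (hΨ0 : Ψ 0 = 0)
    (hΨconc : ConcaveOn ℝ (Ici (0 : ℝ)) Ψ)
    (hmin : ∀ φ : V, (1 / 2) * ‖T φα - fδ‖ ^ 2 + α * J φα ≤
      (1 / 2) * ‖T φ - fδ‖ ^ 2 + α * J φ)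
    (hlow : (1 / 4) * ((τl ^ 2 - 1) / (τl ^ 2 + 1)) * δ ^ 2 ≤ α * Ψ ((τl - 1) * δ)) :
    J φα - J φdag ≤ 2 * ((τl ^ 2 + 1) / (τl - 1)) * Ψ δ := by
  have hgap := tikhonov_minimizer_penalty_gap_le T J (hmin φdag) hnoise
  have hΨτ : Ψ ((τl - 1) * δ) ≤ (τl + 1) * Ψ δ :=
    calc Ψ ((τl - 1) * δ) ≤ Ψ ((τl + 1) * δ) :=
          hΨmono (mem_Ici.2 (by nlinarith)) (mem_Ici.2 (by nlinarith)) (by nlinarith)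
      _ ≤ (τl + 1) * Ψ δ := hΨconc.map_mul_le_mul_map hΨ0.ge (by linarith) hδ.le
  have hδsq := sq_le_of_hofmannMathe_lower_bound hτl hΨτ hα.le hlow
  have : α * (J φα - J φdag) ≤ α * (2 * ((τl ^ 2 + 1) / (τl - 1)) * Ψ δ) := by
    linarith
  exact le_of_mul_le_mul_left this hα

/-- Stability of the `J`-difference under the Hofmann–Mathé lower bound
(Lemma 5.1 of the paper): if `(1/4)·((τ̲² − 1)/(τ̲² + 1))·δ² ≤ α·Ψ((τ̲ − 1)·δ)` then
`J(φ_α^δ) − J(φ†) ≤ 2·((τ̲² + 1)/(τ̲ − 1))·Ψ(δ)`. -/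
theorem J_difference_stability_HofmannMathe
    {V H : Type*} [NormedAddCommGroup V] [NormedSpace ℝ V] [CompleteSpace V]
    [NormedAddCommGroup H] [InnerProductSpace ℝ H] [CompleteSpace H]
    (T : V →L[ℝ] H) (J : V → ℝ) (hJ : ConvexOn ℝ Set.univ J)
    (φdag φα : V) (fδ : H) (δ α τl : ℝ)
    (hδ : 0 < δ) (hα : 0 < α) (hτl : 1 < τl)
    (hnoise : ‖T φdag - fδ‖ ≤ δ)
    (Ψ : ℝ → ℝ)
    (hΨcont : ContinuousOn Ψ (Ici (0 : ℝ)))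
    (hΨmono : MonotoneOn Ψ (Ici (0 : ℝ)))
    (hΨ0 : Ψ 0 = 0)
    (hΨnonneg : ∀ t ∈ Ici (0 : ℝ), 0 ≤ Ψ t)
    (hΨconc : ConcaveOn ℝ (Ici (0 : ℝ)) Ψ)
    (hmin : ∀ φ : V, (1 / 2) * ‖T φα - fδ‖ ^ 2 + α * J φα ≤
      (1 / 2) * ‖T φ - fδ‖ ^ 2 + α * J φ)
    (hlow : (1 / 4) * ((τl ^ 2 - 1) / (τl ^ 2 + 1)) * δ ^ 2 ≤ α * Ψ ((τl - 1) * δ)) :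
    J φα - J φdag ≤ 2 * ((τl ^ 2 + 1) / (τl - 1)) * Ψ δ :=
  J_difference_stability_HofmannMathe_general T J φdag φα fδ δ α τl hδ hα hτl hnoise Ψ hΨmono hΨ0
    hΨconc hmin hlow
end

section
/- (Stability of the J-difference under the new lower bound.) Assume δ > 0, σ ∈ (0,1], τ̲ > 1, ‖f† − f^δ‖_H ≤ δ, φ_α^δ minimizes F_α over V with α > 0, and the regularization parameter satisfies the lower bound (σ/4)·(τ̲ − 1)·δ² ≤ α·Ψ(δ), where Ψ is an index function. Then J(φ_α^δ) − J(φ†) ≤ (2/(σ·(τ̲ − 1)))·Ψ(δ). -/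
open Set

noncomputable def tikhonovFunctional {V H : Type*} [SeminormedAddCommGroup H]
    (T : V → H) (J : V → ℝ) (f : H) (α : ℝ) (φ : V) : ℝ :=
  (1 / 2) * ‖T φ - f‖ ^ 2 + α * J φ

theorem sub_le_sq_norm_div_of_isMinOn_tikhonovFunctional {V H : Type*}
    [SeminormedAddCommGroup H] {T : V → H} {J : V → ℝ} {f : H} {α : ℝ} (hα : 0 < α)
    {φα : V} (hmin : IsMinOn (tikhonovFunctional T J f α) univ φα) (φ : V) :
    J φα - J φ ≤ ‖T φ - f‖ ^ 2 / (2 * α) := by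
  have hcompare := isMinOn_univ_iff.mp hmin φ
  unfold tikhonovFunctional at hcompare
  rw [le_div_iff₀ (by positivity)]
  nlinarith [sq_nonneg ‖T φα - f‖]

theorem J_difference_stability_new_bound_general
    {V H : Type*} [NormedAddCommGroup V] [NormedSpace ℝ V]
    [NormedAddCommGroup H] [InnerProductSpace ℝ H]
    (T : V →L[ℝ] H) (J : V → ℝ)
    (φdag φα : V) (fδ : H) (δ σ α τl : ℝ)
    (hσ0 : 0 < σ) (hα : 0 < α) (hτl : 1 < τl)
    (hnoise : ‖T φdag - fδ‖ ≤ δ)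
    (Ψ : ℝ → ℝ)
    (hmin : ∀ φ : V, (1 / 2) * ‖T φα - fδ‖ ^ 2 + α * J φα ≤
      (1 / 2) * ‖T φ - fδ‖ ^ 2 + α * J φ)
    (hlow : (σ / 4) * (τl - 1) * δ ^ 2 ≤ α * Ψ δ) :
    J φα - J φdag ≤ (2 / (σ * (τl - 1))) * Ψ δ := by
  have hc : 0 < σ * (τl - 1) := mul_pos hσ0 (sub_pos.mpr hτl)
  have hsq : ‖T φdag - fδ‖ ^ 2 ≤ δ ^ 2 := pow_le_pow_left₀ (norm_nonneg _) hnoise 2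
  calc J φα - J φdag ≤ ‖T φdag - fδ‖ ^ 2 / (2 * α) :=
        sub_le_sq_norm_div_of_isMinOn_tikhonovFunctional hα
          (isMinOn_univ_iff.mpr hmin) φdag
    _ ≤ δ ^ 2 / (2 * α) := by gcongr
    _ ≤ (2 / (σ * (τl - 1))) * Ψ δ := by
        rw [div_mul_eq_mul_div, div_le_div_iff₀ (by positivity) hc]
        linarith

/-- Stability of the `J`-difference under the new lower bound (Lemma 5.2 of the paper):
if `(σ/4)·(τ̲ − 1)·δ² ≤ α·Ψ(δ)` then `J(φ_α^δ) − J(φ†) ≤ (2/(σ·(τ̲ − 1)))·Ψ(δ)`. -/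
theorem J_difference_stability_new_bound
    {V H : Type*} [NormedAddCommGroup V] [NormedSpace ℝ V] [CompleteSpace V]
    [NormedAddCommGroup H] [InnerProductSpace ℝ H] [CompleteSpace H]
    (T : V →L[ℝ] H) (J : V → ℝ) (hJ : ConvexOn ℝ Set.univ J)
    (φdag φα : V) (fδ : H) (δ σ α τl : ℝ)
    (hδ : 0 < δ) (hσ0 : 0 < σ) (hσ1 : σ ≤ 1) (hα : 0 < α) (hτl : 1 < τl)
    (hnoise : ‖T φdag - fδ‖ ≤ δ)
    (Ψ : ℝ → ℝ)
    (hΨcont : ContinuousOn Ψ (Ici (0 : ℝ)))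
    (hΨmono : MonotoneOn Ψ (Ici (0 : ℝ)))
    (hΨ0 : Ψ 0 = 0)
    (hΨnonneg : ∀ t ∈ Ici (0 : ℝ), 0 ≤ Ψ t)
    (hmin : ∀ φ : V, (1 / 2) * ‖T φα - fδ‖ ^ 2 + α * J φα ≤
      (1 / 2) * ‖T φ - fδ‖ ^ 2 + α * J φ)
    (hlow : (σ / 4) * (τl - 1) * δ ^ 2 ≤ α * Ψ δ) :
    J φα - J φdag ≤ (2 / (σ * (τl - 1))) * Ψ δ :=
  J_difference_stability_new_bound_general T J φdag φα fδ δ σ α τl hσ0 hα hτl hnoise Ψ hmin hlow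
end

section
/- (Reverse Bregman-distance rate.) Assume δ > 0, σ ∈ (0,1], 1 < τ̲ ≤ τ̄ < ∞, ‖f† − f^δ‖_H ≤ δ, Ψ is a concave index function, the variational source condition holds with coefficient σ, index function Ψ and a subgradient p† of J at φ†, the discrepancy bound ‖Tφ_α^δ − f^δ‖_H ≤ τ̄·δ holds, (σ/4)·(τ̲ − 1)·δ² ≤ α·Ψ(δ) with α > 0, and the functional p ∈ V* given by ⟨p, h⟩ := (1/α)·⟪f^δ − Tφ_α^δ, T h⟫_H is a subgradient of J at φ_α^δ (first-order optimality). Then D_J(φ†, φ_α^δ) ≤ ( (τ̄ + 1) + 4·τ̄·(τ̄ + 1)/(σ·(τ̲ − 1)) )·Ψ(δ), where D_J(φ†, φ_α^δ) := J(φ†) − J(φ_α^δ) − ⟨p, φ† − φ_α^δ⟩. -/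
/-!
The Bregman distance splits as `(J φ† − J φ_α^δ) + ⟨p, φ_α^δ − φ†⟩`. Since the Bregman distance of
`J` at `φ†` is nonnegative, the VSC at `φ_α^δ` bounds the first part by `Ψ ‖Tφ_α^δ − Tφ†‖`, and the
residual `‖Tφ_α^δ − Tφ†‖ ≤ (τ̄ + 1) δ` together with the sublinearity of the concave `Ψ` turns this into
`(τ̄ + 1) Ψ(δ)`. By first-order optimality and Cauchy–Schwarz, the second part is at most
`τ̄ (τ̄ + 1) δ² / α`, and the lower bound on `α` converts `δ² / α` into a multiple of `Ψ(δ)`.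
-/

open Set RealInnerProductSpace

theorem ConcaveOn.le_mul_of_one_le {Ψ : ℝ → ℝ} (hΨ : ConcaveOn ℝ (Ici 0) Ψ) (hΨ0 : 0 ≤ Ψ 0)
    {c x : ℝ} (hc : 1 ≤ c) (hx : 0 ≤ x) : Ψ (c * x) ≤ c * Ψ x := by
  have hc0 : 0 < c := one_pos.trans_le hc
  have hc' : 0 ≤ 1 - c⁻¹ := sub_nonneg.2 (inv_le_one_of_one_le₀ hc)
  -- `x` is the convex combination `c⁻¹ • (c * x) + (1 - c⁻¹) • 0`
  have hmid := hΨ.2 (mem_Ici.2 (mul_nonneg hc0.le hx)) (mem_Ici.2 le_rfl)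
    (inv_nonneg.2 hc0.le) hc' (add_sub_cancel _ _)
  simp only [smul_eq_mul, mul_zero, add_zero, inv_mul_cancel_left₀ hc0.ne'] at hmid
  calc Ψ (c * x) = c * (c⁻¹ * Ψ (c * x)) := (mul_inv_cancel_left₀ hc0.ne' _).symm
    _ ≤ c * Ψ x := by
      gcongr
      exact (le_add_of_nonneg_right (mul_nonneg hc' hΨ0)).trans hmid

section Bregman

variable {V : Type*} [NormedAddCommGroup V] [NormedSpace ℝ V]

theorem sub_le_of_variational_source_condition {J : V → ℝ} {σ r : ℝ} {φdag φ : V}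
    {pdag : V →L[ℝ] ℝ} (hσ : 0 ≤ σ) (hpdag : pdag (φ - φdag) ≤ J φ - J φdag)
    (hVSC : (σ / 2) * (J φ - J φdag - pdag (φ - φdag)) ≤ J φ - J φdag + r) :
    J φdag - J φ ≤ r := by
  have hbregman : 0 ≤ (σ / 2) * (J φ - J φdag - pdag (φ - φdag)) :=
    mul_nonneg (by positivity) (sub_nonneg.2 hpdag)
  linarith

theorem neg_apply_sub_le_of_eq_inner {H : Type*} [NormedAddCommGroup H] [InnerProductSpace ℝ H]
    {T : V →L[ℝ] H} {p : V →L[ℝ] ℝ} {f : H} {α : ℝ} {φ ψ : V} (hα : 0 ≤ α)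
    (hp : ∀ h : V, p h = (1 / α) * ⟪f - T ψ, T h⟫) :
    -p (φ - ψ) ≤ ‖T ψ - f‖ * ‖T ψ - T φ‖ / α := by
  have hinner : ⟪f - T ψ, T ψ - T φ⟫ ≤ ‖T ψ - f‖ * ‖T ψ - T φ‖ := by
    rw [norm_sub_rev (T ψ)]
    exact real_inner_le_norm _ _
  calc -p (φ - ψ) = (1 / α) * ⟪f - T ψ, T ψ - T φ⟫ := by
        rw [hp, map_sub, ← neg_sub (T ψ) (T φ), inner_neg_right, mul_neg, neg_neg]
    _ ≤ (1 / α) * (‖T ψ - f‖ * ‖T ψ - T φ‖) := by gcongr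
    _ = ‖T ψ - f‖ * ‖T ψ - T φ‖ / α := one_div_mul_eq_div _ _

end Bregman

theorem reverse_bregman_distance_rate_general
    {V H : Type*} [NormedAddCommGroup V] [NormedSpace ℝ V]
    [NormedAddCommGroup H] [InnerProductSpace ℝ H]
    (T : V →L[ℝ] H) (J : V → ℝ)
    (φdag φα : V) (fδ : H) (δ σ α τl τu : ℝ)
    (hδ : 0 < δ) (hσ0 : 0 < σ) (hα : 0 < α)
    (hτl : 1 < τl) (hτlu : τl ≤ τu)
    (hnoise : ‖T φdag - fδ‖ ≤ δ)
    (Ψ : ℝ → ℝ)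
    (hΨmono : MonotoneOn Ψ (Ici (0 : ℝ)))
    (hΨ0 : Ψ 0 = 0)
    (hΨnonneg : ∀ t ∈ Ici (0 : ℝ), 0 ≤ Ψ t)
    (hΨconc : ConcaveOn ℝ (Ici (0 : ℝ)) Ψ)
    (pdag : V →L[ℝ] ℝ)
    (hpdag : ∀ v : V, pdag (v - φdag) ≤ J v - J φdag)
    (hVSC : ∀ φ : V, (σ / 2) * (J φ - J φdag - pdag (φ - φdag)) ≤
      J φ - J φdag + Ψ ‖T φ - T φdag‖)
    (hdisc_up : ‖T φα - fδ‖ ≤ τu * δ)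
    (hlow : (σ / 4) * (τl - 1) * δ ^ 2 ≤ α * Ψ δ)
    (p : V →L[ℝ] ℝ)
    (hp : ∀ h : V, p h = (1 / α) * ⟪fδ - T φα, T h⟫) :
    J φdag - J φα - p (φdag - φα) ≤
      ((τu + 1) + 4 * τu * (τu + 1) / (σ * (τl - 1))) * Ψ δ := by
  have hτu : 0 < τu := by linarith
  have hΨδ : 0 ≤ Ψ δ := hΨnonneg δ hδ.le
  have hresidual : ‖T φα - T φdag‖ ≤ (τu + 1) * δ := by
    calc ‖T φα - T φdag‖ ≤ ‖T φα - fδ‖ + ‖fδ - T φdag‖ := norm_sub_le_norm_sub_add_norm_sub ..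
      _ ≤ τu * δ + δ := add_le_add hdisc_up (by rwa [norm_sub_rev])
      _ = (τu + 1) * δ := by ring
  have hJ_gap : J φdag - J φα ≤ (τu + 1) * Ψ δ :=
    calc J φdag - J φα ≤ Ψ ‖T φα - T φdag‖ :=
          sub_le_of_variational_source_condition hσ0.le (hpdag φα) (hVSC φα)
      _ ≤ Ψ ((τu + 1) * δ) := hΨmono (mem_Ici.2 (norm_nonneg _)) (mem_Ici.2 (by positivity)) hresidual
      _ ≤ (τu + 1) * Ψ δ := hΨconc.le_mul_of_one_le hΨ0.ge (by linarith) hδ.le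
  have hδ_sq : δ ^ 2 / α ≤ 4 * Ψ δ / (σ * (τl - 1)) := by
    rw [div_le_div_iff₀ hα (mul_pos hσ0 (by linarith))]
    linarith
  have hp_gap : -p (φdag - φα) ≤ 4 * τu * (τu + 1) / (σ * (τl - 1)) * Ψ δ :=
    calc -p (φdag - φα) ≤ ‖T φα - fδ‖ * ‖T φα - T φdag‖ / α :=
          neg_apply_sub_le_of_eq_inner hα.le hp
      _ ≤ τu * δ * ((τu + 1) * δ) / α := by gcongr
      _ = τu * (τu + 1) * (δ ^ 2 / α) := by ring
      _ ≤ τu * (τu + 1) * (4 * Ψ δ / (σ * (τl - 1))) := by gcongr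
      _ = 4 * τu * (τu + 1) / (σ * (τl - 1)) * Ψ δ := by ring
  linarith

/-- Reverse Bregman-distance rate (Theorem 5.4 of the paper): under the VSC, the upper
discrepancy bound, the new lower bound for `α`, and first-order optimality (the functional
`⟨p, h⟩ = (1/α)·⟪f^δ − Tφ_α^δ, T h⟫` is a subgradient of `J` at `φ_α^δ`), one has
`D_J(φ†, φ_α^δ) ≤ ((τ̄ + 1) + 4·τ̄·(τ̄ + 1)/(σ·(τ̲ − 1)))·Ψ(δ)`. -/
theorem reverse_bregman_distance_rate
    {V H : Type*} [NormedAddCommGroup V] [NormedSpace ℝ V] [CompleteSpace V]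
    [NormedAddCommGroup H] [InnerProductSpace ℝ H] [CompleteSpace H]
    (T : V →L[ℝ] H) (J : V → ℝ) (hJ : ConvexOn ℝ Set.univ J)
    (φdag φα : V) (fδ : H) (δ σ α τl τu : ℝ)
    (hδ : 0 < δ) (hσ0 : 0 < σ) (hσ1 : σ ≤ 1) (hα : 0 < α)
    (hτl : 1 < τl) (hτlu : τl ≤ τu)
    (hnoise : ‖T φdag - fδ‖ ≤ δ)
    (Ψ : ℝ → ℝ)
    (hΨcont : ContinuousOn Ψ (Ici (0 : ℝ)))
    (hΨmono : MonotoneOn Ψ (Ici (0 : ℝ)))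
    (hΨ0 : Ψ 0 = 0)
    (hΨnonneg : ∀ t ∈ Ici (0 : ℝ), 0 ≤ Ψ t)
    (hΨconc : ConcaveOn ℝ (Ici (0 : ℝ)) Ψ)
    (pdag : V →L[ℝ] ℝ)
    (hpdag : ∀ v : V, pdag (v - φdag) ≤ J v - J φdag)
    (hVSC : ∀ φ : V, (σ / 2) * (J φ - J φdag - pdag (φ - φdag)) ≤
      J φ - J φdag + Ψ ‖T φ - T φdag‖)
    (hdisc_up : ‖T φα - fδ‖ ≤ τu * δ)
    (hlow : (σ / 4) * (τl - 1) * δ ^ 2 ≤ α * Ψ δ)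
    (p : V →L[ℝ] ℝ)
    (hp : ∀ h : V, p h = (1 / α) * ⟪fδ - T φα, T h⟫)
    (hp_subgrad : ∀ v : V, p (v - φα) ≤ J v - J φα) :
    J φdag - J φα - p (φdag - φα) ≤
      ((τu + 1) + 4 * τu * (τu + 1) / (σ * (τl - 1))) * Ψ δ :=
  reverse_bregman_distance_rate_general T J φdag φα fδ δ σ α τl τu hδ hσ0 hα hτl hτlu hnoise Ψ
    hΨmono hΨ0 hΨnonneg hΨconc pdag hpdag hVSC hdisc_up hlow p hp
end
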